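/- Let m ≥ 2 be an integer and 0 < λ < 2/m a real number. Then for every prime p ∈ D_λ with p > 2/(2 − λm), f_λ(p)/p ≥ m + 2 − 2/p, i.e., f_λ(p) ≥ (m+2)p − 2. -/

import Mathlib

/-- The set of natural numbers generated by `A` under addition (containing `0`). -/
def NSgen (A : Set ℕ) : Set ℕ := (AddSubmonoid.closure A : Set ℕ)

/-- `S` is a numerical semigroup: additively closed, contains `0`,
has finite complement in `ℕ`, and `S ≠ ℕ`. -/
def IsNumSgrp (S : Set ℕ) : Prop :=
  0 ∈ S ∧ (∀ a ∈ S, ∀ b ∈ S, a + b ∈ S) ∧ Sᶜ.Finite ∧ S ≠ Set.univ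

/-- The Frobenius number: the largest natural number not in `S`. -/
noncomputable def NSfrob (S : Set ℕ) : ℕ := sSup Sᶜ

/-- The genus: the number of gaps of `S`. -/
noncomputable def NSgenus (S : Set ℕ) : ℕ := Sᶜ.ncard

/-- The multiplicity: the least positive element of `S`. -/
noncomputable def NSmult (S : Set ℕ) : ℕ := sInf {n | n ∈ S ∧ n ≠ 0}

/-- The atoms (minimal generators) of `S`: the set `S* \ (S* + S*)` where `S* = S \ {0}`. -/
def NSatoms (S : Set ℕ) : Set ℕ :=
  {n | n ∈ S ∧ n ≠ 0 ∧ ¬ ∃ a, a ∈ S ∧ a ≠ 0 ∧ ∃ b, b ∈ S ∧ b ≠ 0 ∧ n = a + b}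

/-- The embedding dimension: the number of atoms of `S`. -/
noncomputable def NSembdim (S : Set ℕ) : ℕ := (NSatoms S).ncard

/-- The primes in the interval `I_lam(p) = [p, p + lam*p]`. -/
def primesIn (lam : ℝ) (p : ℕ) : Set ℕ :=
  {q | q.Prime ∧ p ≤ q ∧ (q : ℝ) ≤ p + lam * p}

/-- `S_lam(p)`: the numerical semigroup generated by the primes in `[p, p + lam*p]`. -/
def Slam (lam : ℝ) (p : ℕ) : Set ℕ := NSgen (primesIn lam p)

/-- `D_lam`: the primes `p` such that `[p, p + lam*p]` contains at least two primes. -/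
def Dlam (lam : ℝ) : Set ℕ :=
  {p | p.Prime ∧ ∃ q ∈ primesIn lam p, ∃ r ∈ primesIn lam p, q ≠ r}

/-- `f_lam(p)`: the Frobenius number of `S_lam(p)`. -/
noncomputable def flam (lam : ℝ) (p : ℕ) : ℕ := NSfrob (Slam lam p)

/-- `p_n`, the `n`-th prime in natural order (`nthPrime 1 = 2`). -/
noncomputable def nthPrime (n : ℕ) : ℕ := Nat.nth Nat.Prime (n - 1)

/-- `S_n`: the numerical semigroup generated by all primes `≥ p_n`. -/
noncomputable def Sn (n : ℕ) : Set ℕ := NSgen {q | q.Prime ∧ nthPrime n ≤ q}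

/-- `f_n`: the Frobenius number of `S_n`. -/
noncomputable def fn (n : ℕ) : ℕ := NSfrob (Sn n)

/-- `S(p)`: the numerical semigroup generated by the primes in `[p, 2p]`. -/
def Sp (p : ℕ) : Set ℕ := NSgen {q | q.Prime ∧ p ≤ q ∧ q ≤ 2 * p}

/-- Statement `A(m)`: large `N` of the same parity as `m` are sums of `m` almost equal primes. -/
def Astmt (m : ℕ) : Prop :=
  ∀ δ : ℝ, 0 < δ → ∃ N₀ : ℕ, 0 < N₀ ∧ ∀ N : ℕ, N₀ ≤ N → N % 2 = m % 2 →
    ∃ q : Fin m → ℕ, (∀ i, (q i).Prime) ∧ (∑ i, q i) = N ∧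
      ∀ i, |(N : ℝ) / m - q i| < δ * N

/-- `T(m)`: positive integers `t` such that `1+tm`, `3+tm` and `1+t(m+2)` are all prime. -/
def Tset (m : ℕ) : Set ℕ :=
  {t | 0 < t ∧ (1 + t * m).Prime ∧ (3 + t * m).Prime ∧ (1 + t * (m + 2)).Prime}

/-!
A sum of primes from `[p, p + λp]` with `p` odd is a sum of odd numbers, so its number `k` of
summands has the parity of the sum. For `x = (m + 2)p - 2` this forces `k ≡ m (mod 2)`, while
`kp ≤ x < (m + 2)p` forces `k < m + 2`; hence `k ≤ m` and `x ≤ m(1 + λ)p`, which the hypothesis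
`λmp < 2p - 2` rules out. Two distinct primes in the interval are coprime, so the complement
of `S_λ(p)` is bounded and `x` is at most its supremum `f_λ(p)`.
-/

theorem exists_num_summands_of_mem_closure {A : Set ℕ} {a : ℕ} {b : ℝ}
    (hA : ∀ y ∈ A, Odd y ∧ a ≤ y ∧ (y : ℝ) ≤ b) {n : ℕ} (hn : n ∈ AddSubmonoid.closure A) :
    ∃ k : ℕ, k * a ≤ n ∧ (n : ℝ) ≤ k * b ∧ k % 2 = n % 2 := by
  induction hn using AddSubmonoid.closure_induction with
  | mem y hy =>
    obtain ⟨⟨c, rfl⟩, hay, hyb⟩ := hA y hy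
    exact ⟨1, by simpa using hay, by simpa using hyb, by omega⟩
  | zero => exact ⟨0, by simp, by simp, rfl⟩
  | add x y _ _ hx hy =>
    obtain ⟨k, hkx, hxk, hk⟩ := hx
    obtain ⟨l, hly, hyl, hl⟩ := hy
    refine ⟨k + l, by rw [add_mul]; omega, ?_, by omega⟩
    push_cast
    linarith

theorem bddAbove_compl_closure_of_coprime {A : Set ℕ} {q r : ℕ} (hq : q ∈ A) (hr : r ∈ A)
    (hqr : q.Coprime r) (hq1 : 1 < q) (hr1 : 1 < r) :
    BddAbove (AddSubmonoid.closure A : Set ℕ)ᶜ := by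
  refine ⟨q * r - q - r, fun y hy => (frobeniusNumber_pair hqr hq1 hr1).2 fun hyqr => hy ?_⟩
  exact AddSubmonoid.closure_mono (Set.pair_subset hq hr) hyqr

theorem bddAbove_compl_Slam {lam : ℝ} {p : ℕ} (hp : p ∈ Dlam lam) : BddAbove (Slam lam p)ᶜ := by
  obtain ⟨-, q, hq, r, hr, hqr⟩ := hp
  exact bddAbove_compl_closure_of_coprime hq hr ((Nat.coprime_primes hq.1 hr.1).mpr hqr)
    hq.1.one_lt hr.1.one_lt

theorem half_le_of_two_mem_Dlam {lam : ℝ} (h : 2 ∈ Dlam lam) : 1 / 2 ≤ lam := by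
  have key : ∀ q ∈ primesIn lam 2, q ≠ 2 → 1 / 2 ≤ lam := by
    rintro q ⟨hq, -, hqle⟩ hq2
    have : (3 : ℝ) ≤ q := by exact_mod_cast (show 3 ≤ q by have := hq.two_le; omega)
    push_cast at hqle
    linarith
  obtain ⟨-, q, hq, r, hr, hqr⟩ := h
  by_cases hq2 : q = 2
  · exact key r hr (hq2 ▸ hqr.symm)
  · exact key q hq hq2

theorem cast_mul_sub_two {m p : ℕ} (hp : 1 ≤ p) :
    (((m + 2) * p - 2 : ℕ) : ℝ) = (m + 2) * p - 2 := by
  rw [Nat.cast_sub (by nlinarith)]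
  push_cast
  ring

theorem mul_sub_two_notMem_Slam {lam : ℝ} {m p : ℕ} (hp : p.Prime) (hp2 : p ≠ 2) (hlam : 0 ≤ lam)
    (hmp : lam * m * p < 2 * p - 2) : (m + 2) * p - 2 ∉ Slam lam p := by
  intro hx
  have hp_two := hp.two_le
  have hA : ∀ y ∈ primesIn lam p, Odd y ∧ p ≤ y ∧ (y : ℝ) ≤ p + lam * p := fun y ⟨hy, hpy, hyle⟩ =>
    ⟨hy.odd_of_ne_two (by omega), hpy, hyle⟩
  obtain ⟨k, hkx, hxk, hk⟩ := exists_num_summands_of_mem_closure hA hx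
  have hmp_parity : m * p % 2 = m % 2 := by
    rw [Nat.mul_mod, Nat.odd_iff.mp (hp.odd_of_ne_two hp2), Nat.mul_one, Nat.mod_mod]
  have hmp_add : (m + 2) * p = m * p + 2 * p := add_mul ..
  have hkm : k ≤ m := by
    have hk_lt : k < m + 2 := by
      by_contra! hk'
      have := Nat.mul_le_mul_right p hk'
      omega
    omega
  have hsum_le : (k : ℝ) * (p + lam * p) ≤ m * (p + lam * p) := by gcongr
  rw [cast_mul_sub_two hp.one_le] at hxk
  linarith

theorem statement12 (m : ℕ) (hm : 2 ≤ m) (lam : ℝ) (h0 : 0 < lam)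
    (h2 : lam < 2 / (m : ℝ)) (p : ℕ) (hp : p ∈ Dlam lam)
    (hP : 2 / (2 - lam * m) < (p : ℝ)) :
    (m : ℝ) + 2 - 2 / p ≤ (flam lam p : ℝ) / p := by
  have hm0 : (0 : ℝ) < m := by positivity
  have hgap : 0 < 2 - lam * m := by rw [lt_div_iff₀ hm0] at h2; linarith
  have hmp : lam * m * p < 2 * p - 2 := by nlinarith [(div_lt_iff₀ hgap).mp hP]
  have hp2 : p ≠ 2 := by
    rintro rfl
    have hlam := half_le_of_two_mem_Dlam hp
    have hm2 : (2 : ℝ) ≤ m := by exact_mod_cast hm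
    push_cast at hmp
    nlinarith
  have hf : (m + 2) * p - 2 ≤ flam lam p :=
    le_csSup (bddAbove_compl_Slam hp) (mul_sub_two_notMem_Slam hp.1 hp2 h0.le hmp)
  have hppos : (0 : ℝ) < p := by exact_mod_cast hp.1.pos
  rw [le_div_iff₀ hppos, sub_mul, div_mul_cancel₀ _ hppos.ne', ← cast_mul_sub_two hp.1.one_le]
  exact_mod_cast hf
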